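/- If σ_∃ is a non-dominated strategy for L, then EA⁻(σ_∃) is ensurable-optimal for L: it is sufficient for σ_∃, not output-restrictive, and no assumption that is sufficient for L and not output-restrictive strictly contains it. -/
import Mathlib


open scoped Classical

universe u v

variable {I : Type u} {O : Type v}

/-- The finite (even) history consisting of the first `n` (input, output) pairs of a word.
A word in `(Σ_I · Σ_O)^ω` is modelled as `w : ℕ → I × O`, where round `n` consists of the
input letter `(w n).1` followed by the output letter `(w n).2`. -/
def wpref (w : ℕ → I × O) (n : ℕ) : List (I × O) := (List.range n).map w

/-- Outcomes of a controller strategy `σ : (Σ_I·Σ_O)^*·Σ_I → Σ_O`. -/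
def OutC (σ : List (I × O) → I → O) : Set (ℕ → I × O) :=
  {w | ∀ n, (w n).2 = σ (wpref w n) (w n).1}

/-- Outcomes of an environment strategy `τ : (Σ_I·Σ_O)^* → Σ_I`. -/
def OutE (τ : List (I × O) → I) : Set (ℕ → I × O) :=
  {w | ∀ n, (w n).1 = τ (wpref w n)}

/-- Input projection `π_I`. -/
def inputProj (w : ℕ → I × O) : ℕ → I := fun n => (w n).1

/-- `A` is an input assumption: closed under changing output letters. -/
def IsInputAssumption (A : Set (ℕ → I × O)) : Prop :=
  ∀ w w' : ℕ → I × O, inputProj w = inputProj w' → w ∈ A → w' ∈ A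

/-- Cylinder `h·(Σ_I·Σ_O)^ω` of an even history `h`. -/
def cylE (h : List (I × O)) : Set (ℕ → I × O) := {w | wpref w h.length = h}

/-- Cylinder of a general history: an even part plus possibly a pending input letter. -/
def cylH (h : List (I × O) × Option I) : Set (ℕ → I × O) :=
  {w | wpref w h.1.length = h.1 ∧ ∀ i, h.2 = some i → (w h.1.length).1 = i}

/-- A scenario is coherent: no history is a prefix of two words of `S`
that agree on the next input but disagree on the next output. -/
def Coherent (S : Set (ℕ → I × O)) : Prop :=
  ∀ w ∈ S, ∀ w' ∈ S, ∀ n, wpref w n = wpref w' n → (w n).1 = (w' n).1 → (w n).2 = (w' n).2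

/-- The strategy `[S → σ]`: follow a word of the scenario `S` extending the current
history if one exists, and otherwise play `σ`. -/
noncomputable def shiftStrat (S : Set (ℕ → I × O))
    (σ : List (I × O) → I → O) : List (I × O) → I → O := fun h i =>
  if hex : ∃ w, w ∈ S ∧ wpref w h.length = h ∧ (w h.length).1 = i
  then (hex.choose h.length).2
  else σ h i

/-- `EA(σ) = L ∪ ((Σ_I·Σ_O)^ω \ Out(σ))`. -/
def EA (L : Set (ℕ → I × O)) (σ : List (I × O) → I → O) : Set (ℕ → I × O) :=
  L ∪ (OutC σ)ᶜ

/-- The words doomed for `σ`: some even-length prefix extends to an outcome of `σ`,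
but no outcome of `σ` extending that prefix is in `L`. -/
def Doomed (L : Set (ℕ → I × O)) (σ : List (I × O) → I → O) : Set (ℕ → I × O) :=
  {w | ∃ k, (OutC σ ∩ cylE (wpref w k)).Nonempty ∧ OutC σ ∩ cylE (wpref w k) ∩ L = ∅}

/-- `EA⁻(σ) = EA(σ) \ Doomed(σ)`. -/
def EAminus (L : Set (ℕ → I × O)) (σ : List (I × O) → I → O) : Set (ℕ → I × O) :=
  EA L σ \ Doomed L σ

/-- `A` is sufficient for the specification `L` (for some controller strategy). -/
def Sufficient (L A : Set (ℕ → I × O)) : Prop :=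
  ∃ σ : List (I × O) → I → O, OutC σ ∩ A ⊆ L

/-- `A` is output-restrictive. -/
def OutputRestrictive (A : Set (ℕ → I × O)) : Prop :=
  ∃ (h : List (I × O)) (σ : List (I × O) → I → O),
    (A ∩ cylE h).Nonempty ∧ (OutC σ ∩ cylE h).Nonempty ∧ A ∩ OutC σ ∩ cylE h = ∅

/-- The even history of length `n` produced jointly by controller `σ` and environment `τ`. -/
def playH (σ : List (I × O) → I → O) (τ : List (I × O) → I) : ℕ → List (I × O)
  | 0 => []
  | n+1 =>
      let g := playH σ τ n
      g ++ [(τ g, σ g (τ g))]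

/-- The unique joint outcome `Out(σ, τ)`. -/
def play (σ : List (I × O) → I → O) (τ : List (I × O) → I) : ℕ → I × O := fun n =>
  let g := playH σ τ n
  (τ g, σ g (τ g))

/-- History construction when the controller follows `σ` against the fixed input word `u`. -/
def playIH (σ : List (I × O) → I → O) (u : ℕ → I) : ℕ → List (I × O)
  | 0 => []
  | n+1 =>
      let g := playIH σ u n
      g ++ [(u n, σ g (u n))]

/-- The unique outcome `Out(σ, u)` of `σ` against the input word `u`. -/
def playI (σ : List (I × O) → I → O) (u : ℕ → I) : ℕ → I × O := fun n =>
  (u n, σ (playIH σ u n) (u n))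

/-- Outcomes extending the history `h` and following `σ` afterwards, `Out_h(σ)`. -/
def OutFrom (σ : List (I × O) → I → O) (h : List (I × O) × Option I) :
    Set (ℕ → I × O) :=
  {w | wpref w h.1.length = h.1 ∧ (∀ i, h.2 = some i → (w h.1.length).1 = i) ∧
       ∀ n, h.1.length ≤ n → (w n).2 = σ (wpref w n) (w n).1}

/-- Even histories extending the finite history `b`, following `σ` and `τ`. -/
def extH (σ : List (I × O) → I → O) (τ : List (I × O) → I)
    (b : List (I × O)) : ℕ → List (I × O)
  | 0 => b
  | n+1 =>
      let g := extH σ τ b n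
      g ++ [(τ g, σ g (τ g))]

/-- The unique word extending `b` and following `σ` and `τ` afterwards. -/
def extPlay (σ : List (I × O) → I → O) (τ : List (I × O) → I)
    (b : List (I × O)) : ℕ → I × O := fun n =>
  if hn : n < b.length then b.get ⟨n, hn⟩
  else
    let g := extH σ τ b (n - b.length)
    (τ g, σ g (τ g))

/-- The even history obtained from the general history `h`, letting `σ` answer a
pending input letter if there is one. -/
def histBase (σ : List (I × O) → I → O) (h : List (I × O) × Option I) :
    List (I × O) :=
  match h.2 with
  | none => h.1
  | some i => h.1 ++ [(i, σ h.1 i)]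

/-- `Out_h(σ, τ)`: the unique word extending `h`, following `σ` and `τ` afterwards. -/
def playFrom (σ : List (I × O) → I → O) (τ : List (I × O) → I)
    (h : List (I × O) × Option I) : ℕ → I × O :=
  extPlay σ τ (histBase σ h)

/-- `σ` is strongly winning for `L`. -/
def StronglyWinning (L : Set (ℕ → I × O)) (σ : List (I × O) → I → O) : Prop :=
  ∀ h : List (I × O) × Option I,
    (∃ σ' : List (I × O) → I → O, (OutC σ' ∩ cylH h).Nonempty ∧ OutC σ' ∩ cylH h ⊆ L) →
    OutC σ ∩ cylH h ⊆ L

/-- `σ` is subgame winning for `L`. -/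
def SubgameWinning (L : Set (ℕ → I × O)) (σ : List (I × O) → I → O) : Prop :=
  ∀ h : List (I × O) × Option I,
    (∃ σ' : List (I × O) → I → O, OutFrom σ' h ⊆ L) → OutFrom σ h ⊆ L

section Helpers

variable {I : Type u} {O : Type v}

lemma wpref_length (w : ℕ → I × O) (n : ℕ) : (wpref w n).length = n := by
  simp [wpref]

lemma wpref_succ (w : ℕ → I × O) (n : ℕ) :
    wpref w (n+1) = wpref w n ++ [w n] := by
  simp [wpref, List.range_succ]

lemma wpref_getElem (w : ℕ → I × O) {n m : ℕ} (hm : m < n) :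
    (wpref w n)[m]'(by simpa [wpref_length] using hm) = w m := by
  simp [wpref]

lemma wpref_eq_iff {w v : ℕ → I × O} {n : ℕ} :
    wpref w n = wpref v n ↔ ∀ m < n, w m = v m := by
  constructor
  · intro H m hm
    have := congrArg (fun l => l[m]?) H
    simpa [wpref, hm] using this
  · intro H
    apply List.ext_getElem (by simp [wpref_length])
    intro m hm _
    have hm' : m < n := by simpa [wpref_length] using hm
    simp only [wpref, List.getElem_map, List.getElem_range]
    exact H m hm'

lemma wpref_mono {w v : ℕ → I × O} {m n : ℕ} (hmn : m ≤ n)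
    (h : wpref w n = wpref v n) : wpref w m = wpref v m := by
  rw [wpref_eq_iff] at h ⊢
  exact fun j hj => h j (lt_of_lt_of_le hj hmn)

lemma mem_cylE {w x : ℕ → I × O} {k : ℕ} :
    w ∈ cylE (wpref x k) ↔ wpref w k = wpref x k := by
  simp [cylE, wpref_length, Set.mem_setOf_eq]

lemma self_mem_cylE (x : ℕ → I × O) (k : ℕ) : x ∈ cylE (wpref x k) :=
  mem_cylE.2 rfl

lemma wpref_play (σ : List (I × O) → I → O) (τ : List (I × O) → I) (n : ℕ) :
    wpref (play σ τ) n = playH σ τ n := by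
  induction n with
  | zero => simp [wpref, playH]
  | succ n ih => rw [wpref_succ, ih, playH]; rfl

lemma play_mem_OutC (σ : List (I × O) → I → O) (τ : List (I × O) → I) :
    play σ τ ∈ OutC σ := by
  intro n
  rw [wpref_play]
  rfl

lemma play_fst (σ : List (I × O) → I → O) (τ : List (I × O) → I) (n : ℕ) :
    (play σ τ n).1 = τ (wpref (play σ τ) n) := by
  rw [wpref_play]; rfl

/-- If `τ` feeds the inputs of `v` along `v`'s prefixes up to `k`, and `σ` answers
`v`'s outputs there, then the play follows `v` up to `k`. -/
lemma play_agree (σ : List (I × O) → I → O) (τ : List (I × O) → I)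
    (v : ℕ → I × O) (k : ℕ)
    (hin : ∀ m < k, τ (wpref v m) = (v m).1)
    (hout : ∀ m < k, σ (wpref v m) ((v m).1) = (v m).2) :
    wpref (play σ τ) k = wpref v k := by
  induction k with
  | zero => simp [wpref]
  | succ k ih =>
    have hk : wpref (play σ τ) k = wpref v k :=
      ih (fun m hm => hin m (Nat.lt_succ_of_lt hm))
         (fun m hm => hout m (Nat.lt_succ_of_lt hm))
    rw [wpref_succ, wpref_succ, hk]
    congr 1
    have h1 : (play σ τ k).1 = (v k).1 := by
      rw [play_fst, hk, hin k (Nat.lt_succ_self k)]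
    have h2 : (play σ τ k).2 = (v k).2 := by
      have := play_mem_OutC σ τ k
      rw [this, hk, h1, hout k (Nat.lt_succ_self k)]
    simp [Prod.ext_iff, h1, h2]

lemma play_eq (σ : List (I × O) → I → O) (τ : List (I × O) → I)
    (v : ℕ → I × O)
    (hin : ∀ m, τ (wpref v m) = (v m).1)
    (hout : ∀ m, σ (wpref v m) ((v m).1) = (v m).2) :
    play σ τ = v := by
  funext n
  have h := play_agree σ τ v (n+1) (fun m _ => hin m) (fun m _ => hout m)
  have := (wpref_eq_iff.1 h) n (Nat.lt_succ_self n)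
  exact this

/-- Consistency of a prefix with a strategy, extracted from an outcome in the cylinder. -/
lemma cons_of_out {σ : List (I × O) → I → O} {v x : ℕ → I × O} {k : ℕ}
    (hv : v ∈ OutC σ) (hc : wpref v k = wpref x k) :
    ∀ m < k, σ (wpref x m) ((x m).1) = (x m).2 := by
  intro m hm
  have hag : ∀ j < k, v j = x j := wpref_eq_iff.1 hc
  have hpre : wpref v m = wpref x m := wpref_mono (le_of_lt hm) hc
  have hvm : v m = x m := hag m hm
  have := hv m
  rw [hpre, hvm] at this
  exact this.symm

end Helpers
section Main

variable {I : Type u} {O : Type v}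

/-- The oblivious environment strategy following the inputs of `v` realizes `v`
against any strategy of which `v` is an outcome. -/
lemma play_oblivious {σ : List (I × O) → I → O} {v : ℕ → I × O} (hv : v ∈ OutC σ) :
    play σ (fun b => (v b.length).1) = v := by
  apply play_eq
  · intro m; simp [wpref_length]
  · intro m; exact (hv m).symm

lemma steer {σA : List (I × O) → I → O} {x v : ℕ → I × O} {m₀ : ℕ}
    (hAcons : ∀ m < m₀, σA (wpref x m) ((x m).1) = (x m).2)
    (hvO : v ∈ OutC σA)
    (hvp : wpref v m₀ = wpref x m₀)
    (hv1 : (v m₀).1 = (x m₀).1)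
    (hv2 : (v m₀).2 = σA (wpref x m₀) ((x m₀).1)) :
    play σA (fun b => if wpref v b.length = b then (v b.length).1
      else (x b.length).1) = v := by
  apply play_eq
  · intro m
    simp [wpref_length]
  · intro m
    rcases lt_trichotomy m m₀ with h | h | h
    · have hpre : wpref v m = wpref x m := wpref_mono h.le hvp
      have hvm : v m = x m := wpref_eq_iff.1 hvp m h
      rw [hpre, hvm]
      exact hAcons m h
    · subst h
      rw [hvp, hv1]
      exact hv2.symm
    · exact (hvO m).symm

lemma steer2 {σ : List (I × O) → I → O} {x v : ℕ → I × O} {m₀ k : ℕ}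
    (hscons : ∀ m < k, σ (wpref x m) ((x m).1) = (x m).2)
    (hvp : wpref v m₀ = wpref x m₀)
    (hv1 : (v m₀).1 = (x m₀).1)
    (hvne : v m₀ ≠ x m₀) :
    wpref (play σ (fun b => if wpref v b.length = b then (v b.length).1
      else (x b.length).1)) k = wpref x k := by
  apply play_agree
  · intro m _
    simp only [wpref_length]
    split
    · next hc =>
      rcases lt_trichotomy m m₀ with h | h | h
      · exact congrArg Prod.fst (wpref_eq_iff.1 hvp m h)
      · subst h; exact hv1
      · exact absurd (wpref_eq_iff.1 hc m₀ h) hvne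
    · rfl
  · exact hscons

end Main
section Main2

variable {I : Type u} {O : Type v}

/-- Statement: `EA⁻(σ)` is never output-restrictive. -/
lemma EAminus_not_restrictive (L : Set (ℕ → I × O)) (σ : List (I × O) → I → O) :
    ¬ OutputRestrictive (EAminus L σ) := by
  rintro ⟨h, σ', ⟨w, hwE, hwc⟩, ⟨z, hzO, hzc⟩, hdisj⟩
  have hwc' : wpref w h.length = h := hwc
  set k := h.length with hkdef
  have hh : h = wpref w k := hwc'.symm
  have hzk : wpref z k = wpref w k :=
    (show wpref z k = h from hzc).trans hh
  have hwD : w ∉ Doomed L σ := hwE.2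
  by_cases hcyl : (OutC σ ∩ cylE (wpref w k)).Nonempty
  · -- Case B : some σ-outcome through h is in L (since w is not doomed)
    have hBL : (OutC σ ∩ cylE (wpref w k) ∩ L).Nonempty := by
      rcases Set.eq_empty_or_nonempty (OutC σ ∩ cylE (wpref w k) ∩ L) with he | hne
      · exact absurd ⟨k, hcyl, he⟩ hwD
      · exact hne
    obtain ⟨v, ⟨hvO, hvc⟩, hvL⟩ := hBL
    have hvk : wpref v k = wpref w k := mem_cylE.1 hvc
    -- the σ'-play on the inputs of v
    set w' := play σ' (fun b => (v b.length).1) with hw'def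
    have hw'O : w' ∈ OutC σ' := play_mem_OutC _ _
    have hw'k : wpref w' k = wpref v k := by
      apply play_agree
      · intro m _; simp [wpref_length]
      · intro m hm
        have hzv : wpref z k = wpref v k := hzk.trans hvk.symm
        exact cons_of_out hzO hzv m hm
    have hdisj' := Set.eq_empty_iff_forall_notMem.1 hdisj
    by_cases hall : ∀ n, w' n = v n
    · have hweq : w' = v := funext hall
      refine hdisj' v ⟨⟨⟨Or.inl hvL, ?_⟩, by rw [hweq] at hw'O; exact hw'O⟩, ?_⟩
      · rintro ⟨j, hne, hjL⟩
        exact (Set.eq_empty_iff_forall_notMem.1 hjL) v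
          ⟨⟨hvO, self_mem_cylE v j⟩, hvL⟩
      · show wpref v k = h
        exact hvk.trans hh.symm
    · obtain ⟨n₀, hn₀⟩ : ∃ n, w' n ≠ v n := not_forall.1 hall
      set n := Nat.find (not_forall.1 hall) with hndef
      have hspec : w' n ≠ v n := Nat.find_spec (not_forall.1 hall)
      have hbelow : ∀ m < n, w' m = v m := by
        intro m hm
        by_contra hc
        exact absurd (Nat.find_min (not_forall.1 hall) hm) (by simpa using hc)
      have hwvn : wpref w' n = wpref v n := wpref_eq_iff.2 hbelow
      have hfst : (w' n).1 = (v n).1 := by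
        rw [play_fst, hwvn]; simp [wpref_length]
      have hsnd : (w' n).2 ≠ (v n).2 := by
        intro hc
        exact hspec (Prod.ext hfst hc)
      have hkn : k ≤ n := by
        by_contra hkn
        push_neg at hkn
        exact hspec (wpref_eq_iff.1 hw'k n hkn)
      have hw'NO : w' ∉ OutC σ := by
        intro hO
        have h1 := hO n
        have h2 := hvO n
        rw [hwvn, hfst] at h1
        exact hsnd (h1.trans h2.symm)
      have hw'ND : w' ∉ Doomed L σ := by
        rintro ⟨j, ⟨y, hyO, hyc⟩, hjL⟩
        have hyj : wpref y j = wpref w' j := mem_cylE.1 hyc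
        rcases le_or_gt j n with hj | hj
        · refine (Set.eq_empty_iff_forall_notMem.1 hjL) v ⟨⟨hvO, ?_⟩, hvL⟩
          show wpref v (wpref w' j).length = wpref w' j
          rw [wpref_length]
          exact (wpref_mono hj hwvn).symm
        · have h2 : y n = w' n := wpref_eq_iff.1 hyj n hj
          have h3 : wpref y n = wpref w' n := wpref_mono hj.le hyj
          have := hyO n
          rw [h2, h3, hwvn, hfst] at this
          exact hsnd (this.trans (hvO n).symm)
      refine hdisj' w' ⟨⟨⟨Or.inr hw'NO, hw'ND⟩, hw'O⟩, ?_⟩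
      show wpref w' k = h
      exact (hw'k.trans hvk).trans hh.symm
  · -- Case A : no σ-outcome through h at all
    have hdisj' := Set.eq_empty_iff_forall_notMem.1 hdisj
    have hzNO : z ∉ OutC σ := by
      intro hO
      exact hcyl ⟨z, hO, mem_cylE.2 hzk⟩
    have hzND : z ∉ Doomed L σ := by
      rintro ⟨j, ⟨y, hyO, hyc⟩, hjL⟩
      have hyj : wpref y j = wpref z j := mem_cylE.1 hyc
      rcases le_or_gt j k with hj | hj
      · -- transfer the doom witness to w
        have hzwj : wpref z j = wpref w j := wpref_mono hj hzk
        refine hwD ⟨j, ⟨y, hyO, ?_⟩, ?_⟩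
        · exact mem_cylE.2 (hyj.trans hzwj)
        · apply Set.eq_empty_iff_forall_notMem.2
          rintro u ⟨⟨huO, huc⟩, huL⟩
          refine (Set.eq_empty_iff_forall_notMem.1 hjL) u ⟨⟨huO, ?_⟩, huL⟩
          have : wpref u j = wpref w j := mem_cylE.1 huc
          exact mem_cylE.2 (this.trans hzwj.symm)
      · have hyk : wpref y k = wpref z k := wpref_mono hj.le hyj
        exact hcyl ⟨y, hyO, mem_cylE.2 (hyk.trans hzk)⟩
    refine hdisj' z ⟨⟨⟨Or.inr hzNO, hzND⟩, hzO⟩, hzc⟩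

end Main2
section Main3

variable {I : Type u} {O : Type v}

/-- The escape lemma: if `σA` deviates (for the first time at `m₀`) from a word `x`
whose strict prefixes are all non-doomed for `σ` and consistent with `σ` up to `m₀`,
then some outcome of `σA` in `L` extends the deviation history. -/
lemma escape {L A : Set (ℕ → I × O)} {σ σA : List (I × O) → I → O} {x : ℕ → I × O}
    {m₀ : ℕ}
    (hsub : EAminus L σ ⊆ A) (hAsub : A ⊆ EAminus L σA)
    (hAcons : ∀ m < m₀, σA (wpref x m) ((x m).1) = (x m).2)
    (ho₁ : σA (wpref x m₀) ((x m₀).1) ≠ (x m₀).2)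
    (hscons : ∀ m < m₀ + 1, σ (wpref x m) ((x m).1) = (x m).2)
    (hpref : ∀ j ≤ m₀, (OutC σ ∩ cylE (wpref x j) ∩ L).Nonempty) :
    ∃ v, v ∈ OutC σA ∧ v ∈ L ∧ wpref v m₀ = wpref x m₀ ∧ (v m₀).1 = (x m₀).1 ∧
      (v m₀).2 = σA (wpref x m₀) ((x m₀).1) := by
  by_contra hno
  push_neg at hno
  set τ₀ : List (I × O) → I := fun b => (x b.length).1 with hτ₀
  set z := play σA τ₀ with hzdef
  have hzO : z ∈ OutC σA := play_mem_OutC _ _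
  have hzp : wpref z m₀ = wpref x m₀ := by
    apply play_agree
    · intro m _; simp [hτ₀, wpref_length]
    · exact hAcons
  have hz1 : (z m₀).1 = (x m₀).1 := by
    rw [play_fst, hzp]; simp [hτ₀, wpref_length]
  have hz2 : (z m₀).2 = σA (wpref x m₀) ((x m₀).1) := by
    have h := hzO m₀
    rw [hzp, hz1] at h
    exact h
  have hzD : z ∈ Doomed L σA := by
    refine ⟨m₀ + 1, ⟨z, hzO, self_mem_cylE z (m₀ + 1)⟩, ?_⟩
    apply Set.eq_empty_iff_forall_notMem.2
    rintro v ⟨⟨hvO, hvc⟩, hvL⟩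
    have hvz : wpref v (m₀ + 1) = wpref z (m₀ + 1) := mem_cylE.1 hvc
    have h1 : wpref v m₀ = wpref x m₀ := (wpref_mono (Nat.le_succ m₀) hvz).trans hzp
    have h2 : v m₀ = z m₀ := wpref_eq_iff.1 hvz m₀ (Nat.lt_succ_self m₀)
    have h3 : (v m₀).1 = (x m₀).1 := by rw [h2]; exact hz1
    have h4 : (v m₀).2 = σA (wpref x m₀) ((x m₀).1) := by rw [h2]; exact hz2
    exact hno v hvO hvL h1 h3 h4
  have hzNO : z ∉ OutC σ := by
    intro hz
    have h := hz m₀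
    rw [hzp, hz1, hscons m₀ (Nat.lt_succ_self m₀)] at h
    exact ho₁ (hz2.symm.trans h)
  have hzND : z ∉ Doomed L σ := by
    rintro ⟨j, ⟨y, hyO, hyc⟩, hjL⟩
    have hyz : wpref y j = wpref z j := mem_cylE.1 hyc
    rcases le_or_gt j m₀ with hj | hj
    · have hzx : wpref z j = wpref x j := wpref_mono hj hzp
      obtain ⟨u, ⟨huO, huc⟩, huL⟩ := hpref j hj
      refine (Set.eq_empty_iff_forall_notMem.1 hjL) u ⟨⟨huO, ?_⟩, huL⟩
      have : wpref u j = wpref x j := mem_cylE.1 huc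
      exact mem_cylE.2 (this.trans hzx.symm)
    · have h2 : y m₀ = z m₀ := wpref_eq_iff.1 hyz m₀ hj
      have h3 : wpref y m₀ = wpref z m₀ := wpref_mono hj.le hyz
      have h := hyO m₀
      rw [h2, h3, hzp, hz1, hscons m₀ (Nat.lt_succ_self m₀)] at h
      exact ho₁ (hz2.symm.trans h)
  exact (hAsub (hsub ⟨Or.inr hzNO, hzND⟩)).2 hzD

end Main3
section Main4

variable {I : Type u} {O : Type v}

lemma part3_aux (L : Set (ℕ → I × O)) (σ σA : List (I × O) → I → O)
    (A : Set (ℕ → I × O))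
    (hnd : ∀ σ' : List (I × O) → I → O,
      ¬ ((∀ τ : List (I × O) → I, play σ τ ∈ L → play σ' τ ∈ L) ∧
         ¬ (∀ τ : List (I × O) → I, play σ' τ ∈ L → play σ τ ∈ L)))
    (hsuff : OutC σA ∩ A ⊆ L) (hnr : ¬ OutputRestrictive A) :
    ¬ EAminus L σ ⊂ A := by
  intro hss
  have hsub : EAminus L σ ⊆ A := hss.subset
  obtain ⟨x, hxA, hx2⟩ := Set.exists_of_ssubset hss
  have hnr' : ∀ (h : List (I × O)) (σ'' : List (I × O) → I → O),
      (A ∩ cylE h).Nonempty → (OutC σ'' ∩ cylE h).Nonempty →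
      (A ∩ OutC σ'' ∩ cylE h).Nonempty := fun h σ'' h1 h2 =>
    Set.nonempty_iff_ne_empty.2 fun he => hnr ⟨h, σ'', h1, h2, he⟩
  -- A is contained in EA⁻(σA)
  have hAsub : A ⊆ EAminus L σA := by
    intro w hw
    constructor
    · by_cases hO : w ∈ OutC σA
      · exact Or.inl (hsuff ⟨hO, hw⟩)
      · exact Or.inr hO
    · rintro ⟨j, hne, hjL⟩
      obtain ⟨y, ⟨hyA, hyO⟩, hyc⟩ :=
        hnr' (wpref w j) σA ⟨w, hw, self_mem_cylE w j⟩ hne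
      exact (Set.eq_empty_iff_forall_notMem.1 hjL) y
        ⟨⟨hyO, hyc⟩, hsuff ⟨hyO, hyA⟩⟩
  -- σA very weakly dominates σ
  have key1 : ∀ τ : List (I × O) → I, play σ τ ∈ L → play σA τ ∈ L := by
    intro τ hwL
    have hw'EA : play σA τ ∈ EAminus L σ := by
      constructor
      · by_cases hO : play σA τ ∈ OutC σ
        · left
          have heq : play σ τ = play σA τ :=
            play_eq σ τ (play σA τ) (fun m => (play_fst σA τ m).symm)
              (fun m => (hO m).symm)
          rw [← heq]; exact hwL
        · exact Or.inr hO
      · rintro ⟨j, ⟨y, hyO, hyc⟩, hjL⟩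
        have hyj : wpref y j = wpref (play σA τ) j := mem_cylE.1 hyc
        by_cases hag : wpref (play σ τ) j = wpref (play σA τ) j
        · exact (Set.eq_empty_iff_forall_notMem.1 hjL) (play σ τ)
            ⟨⟨play_mem_OutC σ τ, mem_cylE.2 hag⟩, hwL⟩
        · have hex : ∃ m, play σ τ m ≠ play σA τ m := by
            by_contra hc; push_neg at hc
            exact hag (wpref_eq_iff.2 fun m _ => hc m)
          have hspec : play σ τ (Nat.find hex) ≠ play σA τ (Nat.find hex) :=
            Nat.find_spec hex
          set n := Nat.find hex with hn
          have hbelow : ∀ m < n, play σ τ m = play σA τ m := fun m hm => by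
            by_contra hc; exact absurd (Nat.find_min hex hm) (by simpa using hc)
          have hwn : wpref (play σ τ) n = wpref (play σA τ) n :=
            wpref_eq_iff.2 hbelow
          have hnj : n < j := by
            by_contra hc; push_neg at hc
            exact hag (wpref_eq_iff.2 fun m hm => hbelow m (lt_of_lt_of_le hm hc))
          have hfst : (play σ τ n).1 = (play σA τ n).1 := by
            rw [play_fst σ τ n, play_fst σA τ n, hwn]
          have hsnd : (play σ τ n).2 ≠ (play σA τ n).2 := fun hc =>
            hspec (Prod.ext hfst hc)
          have h2 : y n = play σA τ n := wpref_eq_iff.1 hyj n hnj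
          have h3 : wpref y n = wpref (play σA τ) n := wpref_mono hnj.le hyj
          have h := hyO n
          rw [h2, h3, ← hwn, ← hfst] at h
          exact hsnd ((play_mem_OutC σ τ n).trans h.symm)
    exact hsuff ⟨play_mem_OutC σA τ, hsub hw'EA⟩
  have key2 : ∀ τ : List (I × O) → I, play σA τ ∈ L → play σ τ ∈ L := by
    by_contra hk
    exact hnd σA ⟨key1, hk⟩
  by_cases hD : x ∈ Doomed L σ
  · -- Case D : x is doomed for σ; take a minimal doom witness
    have hspec := Nat.find_spec hD
    set k := Nat.find hD with hk
    obtain ⟨⟨v₀, hv₀O, hv₀c⟩, hgL⟩ := hspec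
    have hv₀k : wpref v₀ k = wpref x k := mem_cylE.1 hv₀c
    have hcons : ∀ m < k, σ (wpref x m) ((x m).1) = (x m).2 :=
      cons_of_out hv₀O hv₀k
    have hLpref : ∀ j < k, (OutC σ ∩ cylE (wpref x j) ∩ L).Nonempty := by
      intro j hj
      rcases Set.eq_empty_or_nonempty (OutC σ ∩ cylE (wpref x j) ∩ L) with he | hne
      · exact absurd ⟨⟨v₀, hv₀O, mem_cylE.2 (wpref_mono hj.le hv₀k)⟩, he⟩
          (Nat.find_min hD hj)
      · exact hne
    by_cases hdev : ∃ m, m < k ∧ σA (wpref x m) ((x m).1) ≠ (x m).2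
    · have hdspec := Nat.find_spec hdev
      set m₀ := Nat.find hdev with hm₀
      obtain ⟨hm₀k, ho₁⟩ := hdspec
      have hAcons : ∀ m < m₀, σA (wpref x m) ((x m).1) = (x m).2 := by
        intro m hm
        have h := Nat.find_min hdev hm
        push_neg at h
        exact h (lt_trans hm hm₀k)
      obtain ⟨v, hvO, hvL, hvp, hv1, hv2⟩ := escape hsub hAsub hAcons ho₁
        (fun m hm => hcons m (lt_of_le_of_lt (Nat.lt_succ_iff.1 hm) hm₀k))
        (fun j hj => hLpref j (lt_of_le_of_lt hj hm₀k))
      have hvneq : v m₀ ≠ x m₀ := fun hc => ho₁ (by rw [← hv2, hc])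
      have hplayA : play σA (fun b => if wpref v b.length = b
          then (v b.length).1 else (x b.length).1) = v := steer hAcons hvO hvp hv1 hv2
      have hplayS := steer2 (σ := σ) (k := k) hcons hvp hv1 hvneq
      have hsL : play σ (fun b => if wpref v b.length = b
          then (v b.length).1 else (x b.length).1) ∈ L :=
        key2 _ (by rw [hplayA]; exact hvL)
      exact (Set.eq_empty_iff_forall_notMem.1 hgL) _
        ⟨⟨play_mem_OutC σ _, mem_cylE.2 hplayS⟩, hsL⟩
    · push_neg at hdev
      have hzk : wpref (play σA (fun b => (x b.length).1)) k = wpref x k := by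
        apply play_agree
        · intro m _; simp [wpref_length]
        · exact hdev
      obtain ⟨w, ⟨hwA, hwO⟩, hwc⟩ := hnr' (wpref x k) σA ⟨x, hxA, self_mem_cylE x k⟩
        ⟨play σA (fun b => (x b.length).1), play_mem_OutC σA _, mem_cylE.2 hzk⟩
      have hwL : w ∈ L := hsuff ⟨hwO, hwA⟩
      have hwk : wpref w k = wpref x k := mem_cylE.1 hwc
      have hplayA : play σA (fun b => (w b.length).1) = w := play_oblivious hwO
      have hsL : play σ (fun b => (w b.length).1) ∈ L :=
        key2 _ (by rw [hplayA]; exact hwL)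
      have hsk : wpref (play σ (fun b => (w b.length).1)) k = wpref x k := by
        apply play_agree
        · intro m hm
          simp only [wpref_length]
          exact congrArg Prod.fst (wpref_eq_iff.1 hwk m hm)
        · exact hcons
      exact (Set.eq_empty_iff_forall_notMem.1 hgL) _
        ⟨⟨play_mem_OutC σ _, mem_cylE.2 hsk⟩, hsL⟩
  · -- Case E : x is a losing outcome of σ that is not doomed
    have hxEA : x ∉ EA L σ := fun hEA => hx2 ⟨hEA, hD⟩
    have hxO : x ∈ OutC σ := by
      by_contra hc; exact hxEA (Or.inr hc)
    have hxL : x ∉ L := fun hc => hxEA (Or.inl hc)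
    have hscons : ∀ m, σ (wpref x m) ((x m).1) = (x m).2 := fun m => (hxO m).symm
    have hxNOA : x ∉ OutC σA := fun h => hxL (hsuff ⟨h, hxA⟩)
    have hdev : ∃ m, σA (wpref x m) ((x m).1) ≠ (x m).2 := by
      by_contra hc; push_neg at hc
      exact hxNOA fun n => (hc n).symm
    have ho₁ := Nat.find_spec hdev
    set m₀ := Nat.find hdev with hm₀
    have hAcons : ∀ m < m₀, σA (wpref x m) ((x m).1) = (x m).2 := by
      intro m hm
      exact not_not.1 (Nat.find_min hdev hm)
    have hpref : ∀ j ≤ m₀, (OutC σ ∩ cylE (wpref x j) ∩ L).Nonempty := by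
      intro j _
      rcases Set.eq_empty_or_nonempty (OutC σ ∩ cylE (wpref x j) ∩ L) with he | hne
      · exact absurd ⟨j, ⟨x, hxO, self_mem_cylE x j⟩, he⟩ hD
      · exact hne
    obtain ⟨v, hvO, hvL, hvp, hv1, hv2⟩ := escape hsub hAsub hAcons ho₁
      (fun m _ => hscons m) hpref
    have hvneq : v m₀ ≠ x m₀ := fun hc => ho₁ (by rw [← hv2, hc])
    have hplayA : play σA (fun b => if wpref v b.length = b
        then (v b.length).1 else (x b.length).1) = v := steer hAcons hvO hvp hv1 hv2
    have hsL : play σ (fun b => if wpref v b.length = b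
        then (v b.length).1 else (x b.length).1) ∈ L :=
      key2 _ (by rw [hplayA]; exact hvL)
    have hsx : play σ (fun b => if wpref v b.length = b
        then (v b.length).1 else (x b.length).1) = x := by
      funext n
      have h := steer2 (σ := σ) (k := n+1) (fun m _ => hscons m) hvp hv1 hvneq
      exact wpref_eq_iff.1 h n (Nat.lt_succ_self n)
    rw [hsx] at hsL
    exact hxL hsL

end Main4
/-- if `σ` is non-dominated for `L`, then `EA⁻(σ)` is
ensurable-optimal: sufficient for `σ`, not output-restrictive, and no
non-output-restrictive assumption sufficient for `L` strictly contains it. -/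
theorem nonDominated_EAminus_ensurable_optimal
    (L : Set (ℕ → I × O)) (σ : List (I × O) → I → O)
    (hnd : ∀ σ' : List (I × O) → I → O,
      ¬ ((∀ τ : List (I × O) → I, play σ τ ∈ L → play σ' τ ∈ L) ∧
         ¬ (∀ τ : List (I × O) → I, play σ' τ ∈ L → play σ τ ∈ L))) :
    OutC σ ∩ EAminus L σ ⊆ L ∧
    ¬ OutputRestrictive (EAminus L σ) ∧
    ∀ A : Set (ℕ → I × O), Sufficient L A → ¬ OutputRestrictive A →
      ¬ EAminus L σ ⊂ A := by

  refine ⟨?_, EAminus_not_restrictive L σ, ?_⟩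
  · rintro w ⟨hwO, hEA, -⟩
    rcases hEA with h | h
    · exact h
    · exact absurd hwO h
  · rintro A ⟨σA, hsuff⟩ hnr
    exact part3_aux L σ σA A hnd hsuff hnr
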